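/- Suppose A_ℓ = A₀ for a fixed A₀ ∈ ℝ^{n×m} and all ℓ, that the solution basis is empirically orthonormal (N⁻¹ Σ_{ℓ=1}^N X_{ℓk} X_{ℓq} = δ_{kq}), that the test basis is Y = X, and that for every s ∈ {1,…,r} the equation A₀ x = b^s is solvable for some x ∈ ℝ^m, where b_i^s = N⁻¹ Σ_{ℓ=1}^N b_{ℓi} X_{ℓs}. Then a coefficient array ξ ∈ ℝ^{m×r} solves the projected moment equations Σ_{j,q} B_{ij}^{sq} ξ_j^q = β_i^s (for all i, s) if and only if it solves the empirical L² normal equations Σ_{k,p} G_{jk}^{qp} ξ_k^p = h_j^q (for all j, q); i.e., the two reduced formulations have the same solution set. -/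
import Mathlib


open Finset BigOperators

/-- For deterministic `A_ℓ = A₀`, empirically orthonormal solution
basis, Galerkin test basis `Y = X`, and solvability of `A₀ x = b^s` for every
`s` (with `b_i^s = N⁻¹ ∑_ℓ b_{ℓi} X_{ℓs}`), the projected moment equations and
the empirical L² normal equations have the same solution set. -/
theorem projected_iff_normal_of_deterministic_A_and_solvable
    (N n m r : ℕ) (hN : 1 ≤ N) (hn : 1 ≤ n) (hm : 1 ≤ m) (hr : 1 ≤ r)
    (A : Fin N → Fin n → Fin m → ℝ) (A₀ : Fin n → Fin m → ℝ)
    (b : Fin N → Fin n → ℝ) (X : Fin N → Fin r → ℝ)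
    (hA : ∀ ℓ, A ℓ = A₀)
    (horth : ∀ k q : Fin r,
      (N : ℝ)⁻¹ * ∑ ℓ, X ℓ k * X ℓ q = if k = q then 1 else 0)
    (hsolv : ∀ s : Fin r, ∃ x : Fin m → ℝ,
      ∀ i : Fin n, ∑ j, A₀ i j * x j = (N : ℝ)⁻¹ * ∑ ℓ, b ℓ i * X ℓ s)
    (ξ : Fin m → Fin r → ℝ) :
    (∀ (i : Fin n) (s : Fin r),
        ∑ j, ∑ q, ((N : ℝ)⁻¹ * ∑ ℓ, A ℓ i j * X ℓ q * X ℓ s) * ξ j q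
          = (N : ℝ)⁻¹ * ∑ ℓ, b ℓ i * X ℓ s)
    ↔
    (∀ (j : Fin m) (q : Fin r),
        ∑ k, ∑ p,
            ((N : ℝ)⁻¹ * ∑ ℓ, ∑ i, A ℓ i j * A ℓ i k * X ℓ q * X ℓ p) * ξ k p
          = (N : ℝ)⁻¹ * ∑ ℓ, ∑ i, A ℓ i j * b ℓ i * X ℓ q) := by
  simp only [hA]
  set β : Fin n → Fin r → ℝ := fun i s => (N : ℝ)⁻¹ * ∑ ℓ, b ℓ i * X ℓ s with hβ
  have hβi : ∀ (i : Fin n) (s : Fin r),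
      β i s = (N : ℝ)⁻¹ * ∑ ℓ, b ℓ i * X ℓ s := fun _ _ => rfl
  -- Reduce the projected LHS
  have hL : ∀ (i : Fin n) (s : Fin r),
      (∑ j, ∑ q, ((N : ℝ)⁻¹ * ∑ ℓ, A₀ i j * X ℓ q * X ℓ s) * ξ j q)
        = ∑ j, A₀ i j * ξ j s := by
    intro i s
    refine Finset.sum_congr rfl fun j _ => ?_
    have key : ∀ q : Fin r,
        ((N : ℝ)⁻¹ * ∑ ℓ, A₀ i j * X ℓ q * X ℓ s) * ξ j q
          = (if q = s then A₀ i j * ξ j q else 0) := by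
      intro q
      have h1 : (∑ ℓ, A₀ i j * X ℓ q * X ℓ s) = A₀ i j * ∑ ℓ, X ℓ q * X ℓ s := by
        rw [Finset.mul_sum]; exact Finset.sum_congr rfl fun ℓ _ => by ring
      rw [h1, show (N : ℝ)⁻¹ * (A₀ i j * ∑ ℓ, X ℓ q * X ℓ s) * ξ j q
          = ((N : ℝ)⁻¹ * ∑ ℓ, X ℓ q * X ℓ s) * (A₀ i j * ξ j q) by ring,
        horth q s]
      split <;> simp
    rw [Finset.sum_congr rfl fun q _ => key q]
    simp
  -- Reduce the normal-equation LHS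
  have hGL : ∀ (j : Fin m) (q : Fin r),
      (∑ k, ∑ p, ((N : ℝ)⁻¹ * ∑ ℓ, ∑ i, A₀ i j * A₀ i k * X ℓ q * X ℓ p) * ξ k p)
        = ∑ i, A₀ i j * ∑ k, A₀ i k * ξ k q := by
    intro j q
    have h2 : (∑ k, ∑ p, ((N : ℝ)⁻¹ * ∑ ℓ, ∑ i, A₀ i j * A₀ i k * X ℓ q * X ℓ p) * ξ k p)
        = ∑ k, (∑ i, A₀ i j * A₀ i k) * ξ k q := by
      refine Finset.sum_congr rfl fun k _ => ?_
      have key : ∀ p : Fin r,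
          ((N : ℝ)⁻¹ * ∑ ℓ, ∑ i, A₀ i j * A₀ i k * X ℓ q * X ℓ p) * ξ k p
            = (if q = p then (∑ i, A₀ i j * A₀ i k) * ξ k p else 0) := by
        intro p
        have h1 : (∑ ℓ, ∑ i, A₀ i j * A₀ i k * X ℓ q * X ℓ p)
            = (∑ i, A₀ i j * A₀ i k) * ∑ ℓ, X ℓ q * X ℓ p := by
          rw [Finset.sum_mul, Finset.sum_comm]
          refine Finset.sum_congr rfl fun i _ => ?_
          rw [Finset.mul_sum]
          exact Finset.sum_congr rfl fun ℓ _ => by ring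
        rw [h1, show (N : ℝ)⁻¹ * ((∑ i, A₀ i j * A₀ i k) * ∑ ℓ, X ℓ q * X ℓ p) * ξ k p
            = ((N : ℝ)⁻¹ * ∑ ℓ, X ℓ q * X ℓ p) * ((∑ i, A₀ i j * A₀ i k) * ξ k p) by ring,
          horth q p]
        split <;> simp
      rw [Finset.sum_congr rfl fun p _ => key p]
      simp
    rw [h2]
    rw [show (∑ i, A₀ i j * ∑ k, A₀ i k * ξ k q)
        = ∑ i, ∑ k, A₀ i j * (A₀ i k * ξ k q) from
      Finset.sum_congr rfl fun i _ => Finset.mul_sum _ _ _]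
    rw [Finset.sum_comm]
    refine Finset.sum_congr rfl fun k _ => ?_
    rw [Finset.sum_mul]
    exact Finset.sum_congr rfl fun i _ => by ring
  -- Reduce the normal-equation RHS
  have hGR : ∀ (j : Fin m) (q : Fin r),
      ((N : ℝ)⁻¹ * ∑ ℓ, ∑ i, A₀ i j * b ℓ i * X ℓ q)
        = ∑ i, A₀ i j * β i q := by
    intro j q
    rw [Finset.sum_comm, Finset.mul_sum]
    refine Finset.sum_congr rfl fun i _ => ?_
    rw [hβi,
      show (∑ ℓ, A₀ i j * b ℓ i * X ℓ q) = A₀ i j * ∑ ℓ, b ℓ i * X ℓ q from by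
        rw [Finset.mul_sum]; exact Finset.sum_congr rfl fun ℓ _ => by ring]
    ring
  constructor
  · intro hP j q
    rw [hGL, hGR]
    refine Finset.sum_congr rfl fun i _ => ?_
    have hPq : (∑ k, A₀ i k * ξ k q) = β i q := by
      rw [← hL i q]; exact hP i q
    rw [hPq]
  · intro hQ i s
    rw [hL]
    obtain ⟨x, hx⟩ := hsolv s
    set w : Fin n → ℝ := fun i => ∑ k, A₀ i k * ξ k s - β i s with hw
    have hwi : ∀ i, w i = ∑ k, A₀ i k * ξ k s - β i s := fun _ => rfl
    have hQ0 : ∀ j : Fin m, ∑ i, A₀ i j * w i = 0 := by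
      intro j
      have h := hQ j s
      rw [hGL, hGR] at h
      have h' : (∑ i, A₀ i j * ∑ k, A₀ i k * ξ k s) - (∑ i, A₀ i j * β i s) = 0 := by
        rw [h]; ring
      rw [← Finset.sum_sub_distrib] at h'
      calc (∑ i, A₀ i j * w i)
          = ∑ i, (A₀ i j * ∑ k, A₀ i k * ξ k s - A₀ i j * β i s) := by
            refine Finset.sum_congr rfl fun i _ => ?_
            rw [hwi]; ring
        _ = 0 := h'
    have hwx : ∀ i, w i = ∑ k, A₀ i k * (ξ k s - x k) := by
      intro i
      rw [hwi, hβi, ← hx i, ← Finset.sum_sub_distrib]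
      exact Finset.sum_congr rfl fun k _ => by ring
    have hsq : ∑ i, w i ^ 2 = 0 := by
      calc ∑ i, w i ^ 2 = ∑ i, w i * ∑ k, A₀ i k * (ξ k s - x k) := by
            refine Finset.sum_congr rfl fun i _ => ?_
            rw [← hwx i]; ring
        _ = ∑ k, (ξ k s - x k) * ∑ i, A₀ i k * w i := by
            rw [show (∑ i, w i * ∑ k, A₀ i k * (ξ k s - x k))
                = ∑ i, ∑ k, w i * (A₀ i k * (ξ k s - x k)) from
              Finset.sum_congr rfl fun i _ => Finset.mul_sum _ _ _]
            rw [Finset.sum_comm]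
            refine Finset.sum_congr rfl fun k _ => ?_
            rw [Finset.mul_sum]
            exact Finset.sum_congr rfl fun i _ => by ring
        _ = 0 := by
            simp only [hQ0, mul_zero, Finset.sum_const_zero]
    have hw0 : w i = 0 := by
      have h := (Finset.sum_eq_zero_iff_of_nonneg (fun i _ => sq_nonneg (w i))).mp hsq i
        (Finset.mem_univ i)
      exact pow_eq_zero_iff (by norm_num) |>.mp h
    have h := hwi i
    rw [hw0] at h
    have hb := hβi i s
    linarith [h, hb]
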